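/- arXiv:2010.12150 — 6 statements merged into one kernel-verified Lean document; each statement's English description precedes it below -/
import Mathlib

section
/- Let g, b, c : K → ℤ be functions on a type K of knots, and f(n) defined by f(2)=1, f(3)=5/3, f(n)=2n-5 for n≥4. Assume: (1) for every knot K, b(K) + 2g(K) - 1 ≤ c(K) ≤ f(b(K))·(2g(K) - 1 + b(K)); (2) g is additive under connected sum: g(K # K') = g(K) + g(K'); (3) b(K # K') = b(K) + b(K') - 1. Then c(K # K') ≥ c(K)/f(b(K)) + c(K')/f(b(K')). -/
def bmF (n : ℕ) : ℚ := if n = 2 then 1 else if n = 3 then 5/3 else 2 * n - 5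

lemma bmF_pos {n : ℕ} (hn : 2 ≤ n) : 0 < bmF n := by
  unfold bmF
  split_ifs with h2 h3
  · norm_num
  · norm_num
  · have h4 : 4 ≤ n := by omega
    have : (4 : ℚ) ≤ (n : ℚ) := by exact_mod_cast h4
    linarith

theorem composite_crossing_bound
    (Knot : Type) (g c : Knot → ℤ) (b : Knot → ℕ)
    (connSum : Knot → Knot → Knot)
    (hBM : ∀ K : Knot, ((b K : ℚ) + 2 * g K - 1 ≤ c K) ∧
      ((c K : ℚ) ≤ bmF (b K) * (2 * g K - 1 + b K)))
    (hg : ∀ K K' : Knot, g (connSum K K') = g K + g K')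
    (hb : ∀ K K' : Knot, (b (connSum K K') : ℤ) = b K + b K' - 1)
    (K K' : Knot) (hbK : 2 ≤ b K) (hbK' : 2 ≤ b K') :
    (c (connSum K K') : ℚ) ≥ (c K : ℚ) / bmF (b K) + (c K' : ℚ) / bmF (b K') := by
  have hfK := bmF_pos hbK
  have hfK' := bmF_pos hbK'
  have h1 : (c K : ℚ) / bmF (b K) ≤ 2 * g K - 1 + b K := by
    rw [div_le_iff₀ hfK]
    linarith [(hBM K).2]
  have h2 : (c K' : ℚ) / bmF (b K') ≤ 2 * g K' - 1 + b K' := by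
    rw [div_le_iff₀ hfK']
    linarith [(hBM K').2]
  have h3 := (hBM (connSum K K')).1
  have hgQ : (g (connSum K K') : ℚ) = g K + g K' := by exact_mod_cast hg K K'
  have hbQ : (b (connSum K K') : ℚ) = (b K : ℚ) + b K' - 1 := by
    exact_mod_cast hb K K'
  rw [hgQ, hbQ] at h3
  linarith
end

section
/- Let g, b, c : K → ℤ with 2g(K) - 1 + b(K) ≤ c(K) ≤ f(b(K))·(2g(K) - 1 + b(K)), f as above. Suppose K_p is a braided p-cable of K (p ≥ 1) with g(K_p) ≥ p·g(K) and b(K_p) = p·b(K). Then c(K_p) ≥ (p/f(b(K)))·c(K) + (p - 1). -/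
theorem braided_cable_crossing_bound
    (Knot : Type) (g c : Knot → ℤ) (b : Knot → ℕ)
    (hBM : ∀ J : Knot, ((2 * g J - 1 + b J : ℚ) ≤ c J) ∧
      ((c J : ℚ) ≤ bmF (b J) * (2 * g J - 1 + b J)))
    (K Kp : Knot) (p : ℕ) (hp : 1 ≤ p) (hbK : 2 ≤ b K)
    (hgcable : (p : ℤ) * g K ≤ g Kp)
    (hbcable : b Kp = p * b K) :
    (c Kp : ℚ) ≥ ((p : ℚ) / bmF (b K)) * c K + ((p : ℚ) - 1) := by
  have hF : 0 < bmF (b K) := bmF_pos hbK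
  obtain ⟨h1, _⟩ := hBM Kp
  obtain ⟨_, h2⟩ := hBM K
  have hp1 : (1 : ℚ) ≤ p := by exact_mod_cast hp
  have hg : ((p : ℚ)) * g K ≤ g Kp := by exact_mod_cast hgcable
  have hb : (b Kp : ℚ) = p * b K := by exact_mod_cast hbcable
  -- c K / bmF ≤ 2 g K - 1 + b K
  have hdiv : (c K : ℚ) / bmF (b K) ≤ 2 * g K - 1 + b K := by
    rw [div_le_iff₀ hF]
    linarith [h2]
  have key : ((p : ℚ) / bmF (b K)) * c K ≤ p * (2 * g K - 1 + b K) := by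
    have := mul_le_mul_of_nonneg_left hdiv (by linarith : (0:ℚ) ≤ p)
    calc ((p : ℚ) / bmF (b K)) * c K = p * ((c K : ℚ) / bmF (b K)) := by ring
      _ ≤ p * (2 * g K - 1 + b K) := this
  have hchain : (p : ℚ) * (2 * g K - 1 + b K) + (p - 1) ≤ c Kp := by
    have : (p : ℚ) * (2 * g K - 1 + b K) + (p - 1) = 2 * (p * g K) - 1 + p * b K := by
      ring
    rw [this]
    have := h1
    rw [hb] at this
    linarith
  linarith
end

section
/- Let c, b, g be knot invariants satisfying 2g(K)-1+b(K) ≤ c(K) ≤ f(b(K))·(2g(K)-1+b(K)) with f(3) = 5/3. If b(K) ≤ 3, p ≥ 2, and K_p is a braided p-cable of K with g(K_p) ≥ p·g(K), b(K_p) = p·b(K), then c(K_p) ≥ c(K). In particular the cabling crossing number conjecture holds for knots of braid index at most 3. -/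
theorem cabling_conjecture_braid_index_three
    (Knot : Type) (g c : Knot → ℤ) (b : Knot → ℕ)
    (hBM : ∀ J : Knot, ((2 * g J - 1 + b J : ℚ) ≤ c J) ∧
      ((c J : ℚ) ≤ bmF (b J) * (2 * g J - 1 + b J)))
    (K Kp : Knot) (p : ℕ) (hp : 2 ≤ p)
    (hbK1 : 1 ≤ b K) (hbK3 : b K ≤ 3) (hgK : 0 ≤ g K)
    (hgcable : (p : ℤ) * g K ≤ g Kp)
    (hbcable : b Kp = p * b K) :
    c K ≤ c Kp := by
  obtain ⟨hK1, hK2⟩ := hBM K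
  obtain ⟨hKp1, _⟩ := hBM Kp
  have hpQ : (2 : ℚ) ≤ (p : ℚ) := by exact_mod_cast hp
  have hgQ : (0 : ℚ) ≤ (g K : ℚ) := by exact_mod_cast hgK
  have hgc : ((p : ℚ)) * (g K : ℚ) ≤ (g Kp : ℚ) := by exact_mod_cast hgcable
  have hcc : ((c K : ℚ)) ≤ (c Kp : ℚ) → c K ≤ c Kp := by exact_mod_cast fun h => h
  apply hcc
  rw [hbcable] at hKp1
  push_cast at hKp1
  interval_cases h : b K <;> simp [bmF, h] at hK2 hKp1 <;> nlinarith [hK1, hK2, hKp1, hpQ, hgQ, hgc]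
end

section
/- Let b, χ be integers and V(α,β) finitely supported nonnegative integers with V(1,0)=V(0,2)=V(0,3)=V(1,1)=0 and V(0,v)=0 for v<4. Suppose the Euler characteristic equality 2V(1,0)+2V(0,2)+V(0,3)+V(1,1) − 4χ = V(2,1)+2V(3,0)+Σ_{v≥4}Σ_{α=0}^{v}(v+α−4)V(α,v−α) holds, and suppose integers R_aa, R_ab ≥ 0 satisfy both 2R_aa + R_ab − 4b ≤ Σ_{v}Σ_{α}(v−4)V(α,v−α) and 2R_aa + R_ab = Σ_{v}Σ_{α} α·V(α,v−α). Then 2R_aa + R_ab ≤ −2χ + 2b. -/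
open Finset in
theorem euler_count_key_step
    (N : ℕ) (b χ Raa Rab : ℤ) (V : ℕ → ℕ → ℤ)
    (hV : ∀ α β, 0 ≤ V α β)
    (hsupp : ∀ α β : ℕ, N < α + β → V α β = 0)
    (h10 : V 1 0 = 0) (h02 : V 0 2 = 0) (h03 : V 0 3 = 0) (h11 : V 1 1 = 0)
    (h0v : ∀ v : ℕ, v < 4 → V 0 v = 0)
    (hEuler : 2 * V 1 0 + 2 * V 0 2 + V 0 3 + V 1 1 - 4 * χ =
      V 2 1 + 2 * V 3 0 +
        ∑ v ∈ Icc 4 N, ∑ α ∈ range (v + 1), ((v : ℤ) + α - 4) * V α (v - α))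
    (hRaa : 0 ≤ Raa) (hRab : 0 ≤ Rab)
    (hineq : 2 * Raa + Rab - 4 * b ≤
      ∑ v ∈ range (N + 1), ∑ α ∈ range (v + 1), ((v : ℤ) - 4) * V α (v - α))
    (hedge : 2 * Raa + Rab =
      ∑ v ∈ range (N + 1), ∑ α ∈ range (v + 1), (α : ℤ) * V α (v - α)) :
    2 * Raa + Rab ≤ -2 * χ + 2 * b := by
  set f : ℕ → ℤ := fun v => ∑ α ∈ range (v + 1), ((v : ℤ) + α - 4) * V α (v - α) with hf
  have hzero : ∀ v, N < v → f v = 0 := by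
    intro v hv
    refine Finset.sum_eq_zero fun α hα => ?_
    have hαv : α ≤ v := Nat.lt_succ_iff.mp (Finset.mem_range.mp hα)
    have : V α (v - α) = 0 := hsupp α (v - α) (by omega)
    simp [this]
  have hAB : (∑ v ∈ range (N+1), ∑ α ∈ range (v+1), ((v:ℤ)-4)*V α (v-α)) +
      (∑ v ∈ range (N+1), ∑ α ∈ range (v+1), (α:ℤ)*V α (v-α)) =
      ∑ v ∈ range (N+1), f v := by
    rw [← Finset.sum_add_distrib]
    refine Finset.sum_congr rfl fun v _ => ?_
    rw [hf, ← Finset.sum_add_distrib]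
    exact Finset.sum_congr rfl fun α _ => by ring
  have hlow : ∑ v ∈ range 4, f v = V 2 1 + 2 * V 3 0 := by
    simp only [hf, Finset.sum_range_succ, Finset.sum_range_zero]
    norm_num
    rw [h0v 0 (by norm_num), h0v 1 (by norm_num), h0v 2 (by norm_num),
      h0v 3 (by norm_num), h10, h11]
    ring
  have hsplit : ∑ v ∈ range (N+1), f v = ∑ v ∈ range 4, f v + ∑ v ∈ Icc 4 N, f v := by
    rcases le_or_gt 3 N with hN | hN
    · have h1 : (4:ℕ) ≤ N + 1 := by omega
      rw [Finset.range_eq_Ico, ← Finset.sum_Ico_consecutive f (Nat.zero_le 4) h1,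
        ← Finset.range_eq_Ico, ← Finset.Ico_add_one_right_eq_Icc]
    · have hIcc : Icc 4 N = (∅ : Finset ℕ) := by
        rw [Finset.Icc_eq_empty_iff]; omega
      rw [hIcc, Finset.sum_empty, add_zero]
      exact Finset.sum_subset (Finset.range_subset_range.mpr (by omega))
        fun v _ hv => hzero v (by simp only [Finset.mem_range] at hv; omega)
  have hE : -4 * χ = V 2 1 + 2 * V 3 0 +
      ∑ v ∈ Icc 4 N, f v := by
    rw [h10, h02, h03, h11] at hEuler
    linarith [hEuler]
  have : 2 * (2 * Raa + Rab) - 4 * b ≤ ∑ v ∈ range (N+1), f v := by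
    calc 2 * (2 * Raa + Rab) - 4 * b
        = (2 * Raa + Rab - 4 * b) + (2 * Raa + Rab) := by ring
      _ ≤ _ := by rw [← hAB]; exact add_le_add hineq (le_of_eq hedge)
  rw [hsplit, hlow] at this
  linarith
end

section
/- Let b, g, c be knot invariants with b + 2g − 1 ≤ c ≤ f(b)·(2g − 1 + b), where f(2)=1, f(3)=5/3, f(n)=2n−5 for n≥4. Then every knot K is (1/f(b(K)))-regular: if a knot K' contains K as a prime factor, i.e. K' = K # K'' for some knot K'', and genus and braid-index-minus-one are additive under #, then c(K') ≥ c(K)/f(b(K)). -/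
theorem regularity
    (Knot : Type) (g c : Knot → ℤ) (b : Knot → ℕ)
    (connSum : Knot → Knot → Knot)
    (hBM : ∀ J : Knot, ((b J : ℚ) + 2 * g J - 1 ≤ c J) ∧
      ((c J : ℚ) ≤ bmF (b J) * (2 * g J - 1 + b J)))
    (hg : ∀ J J' : Knot, g (connSum J J') = g J + g J')
    (hb : ∀ J J' : Knot, (b (connSum J J') : ℤ) = b J + b J' - 1)
    (hpos : ∀ J : Knot, 0 ≤ 2 * g J - 1 + (b J : ℤ))
    (K K' K'' : Knot) (hbK : 2 ≤ b K)
    (hprime : K' = connSum K K'') :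
    (c K' : ℚ) ≥ (c K : ℚ) / bmF (b K) := by
  have hFpos : 0 < bmF (b K) := by
    unfold bmF
    split
    · norm_num
    · split
      · norm_num
      · have h4 : 4 ≤ b K := by omega
        have : (4 : ℚ) ≤ (b K : ℚ) := by exact_mod_cast h4
        linarith
  rw [ge_iff_le, div_le_iff₀ hFpos]
  -- c K ≤ bmF (b K) * (2 g K - 1 + b K)
  have h1 : (c K : ℚ) ≤ bmF (b K) * (2 * g K - 1 + b K) := (hBM K).2
  -- 2 g K - 1 + b K ≤ c K'
  have h2 : (b K' : ℚ) + 2 * g K' - 1 ≤ c K' := (hBM K').1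
  have hbQ : (b K' : ℚ) = b K + b K'' - 1 := by
    have := hb K K''
    rw [← hprime] at this
    exact_mod_cast this
  have hgQ : (g K' : ℚ) = g K + g K'' := by
    have := hg K K''
    rw [← hprime] at this
    exact_mod_cast congrArg (Int.cast : ℤ → ℚ) this
  have hpQ : (0 : ℚ) ≤ 2 * g K'' - 1 + b K'' := by
    have := hpos K''
    exact_mod_cast this
  have h3 : (2 * (g K : ℚ) - 1 + b K) ≤ c K' := by
    rw [hbQ, hgQ] at h2
    linarith
  calc (c K : ℚ) ≤ bmF (b K) * (2 * g K - 1 + b K) := h1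
    _ ≤ (c K' : ℚ) * bmF (b K) := by
        rw [mul_comm]
        exact mul_le_mul_of_nonneg_right h3 hFpos.le
end

section
/- Suppose every link L admits a closed b(L)-braid diagram with at most f(b(L))·(−χ(L)+b(L)) crossings, where f(2)=1, f(3)=5/3, f(n)=2n−5 for n≥4. Then for fixed integers g ≥ 0 and n ≥ 1, the set of knots K with genus g and braid index n is finite, bounded by the number of braid words in B_n of length at most ⌈f(n)·(2g−1+n)⌉. -/
open Finset in
/-- Quantitative Birman–Menasco finiteness: if every knot admits a braid-word
diagram on `b K` strands (letters `σ_i^{±1}`, `i < b K - 1`) of length at most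
`⌈f(b K)·(2g(K) - 1 + b K)⌉`, and distinct knots have distinct diagrams, then
for fixed genus `g` and braid index `n` the set of such knots is finite, bounded
by the number of braid words of that length. -/
theorem quantitative_birman_menasco_finiteness
    (Knot : Type) (genus braidIndex : Knot → ℕ)
    (word : Knot → List (ℕ × Bool))
    (hinj : ∀ K K' : Knot, word K = word K' → K = K')
    (hgen : ∀ K : Knot, ∀ x ∈ word K, x.1 < braidIndex K - 1)
    (hlen : ∀ K : Knot, ((word K).length : ℤ) ≤
      ⌈bmF (braidIndex K) * (2 * (genus K : ℚ) - 1 + braidIndex K)⌉)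
    (g n : ℕ) (hn : 1 ≤ n) :
    {K : Knot | genus K = g ∧ braidIndex K = n}.Finite ∧
      Nat.card {K : Knot | genus K = g ∧ braidIndex K = n} ≤
        ∑ k ∈ range ((⌈bmF n * (2 * (g : ℚ) - 1 + n)⌉).toNat + 1),
          (2 * (n - 1)) ^ k := by
  set L : ℕ := (⌈bmF n * (2 * (g : ℚ) - 1 + n)⌉).toNat with hL
  set S := {K : Knot | genus K = g ∧ braidIndex K = n} with hS
  have hlenS : ∀ K : S, (word K.1).length ≤ L := by
    rintro ⟨K, hg, hb⟩
    have h := hlen K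
    rw [hg, hb] at h
    have := Int.toNat_le_toNat h
    simpa using this
  have hgenS : ∀ K : S, ∀ x ∈ word K.1, x.1 < n - 1 := by
    rintro ⟨K, hg, hb⟩ x hx
    have := hgen K x hx
    rwa [hb] at this
  let f : S → Σ k : Fin (L + 1), List.Vector (Fin (n - 1) × Bool) k :=
    fun K => ⟨⟨(word K.1).length, Nat.lt_succ_of_le (hlenS K)⟩,
      ⟨(word K.1).attach.map (fun x => (⟨x.1.1, hgenS K x.1 x.2⟩, x.1.2)), by simp⟩⟩
  let π : (Σ k : Fin (L + 1), List.Vector (Fin (n - 1) × Bool) k) → List (ℕ × Bool) :=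
    fun v => v.2.toList.map (fun p => (p.1.1, p.2))
  have hπf : ∀ K : S, π (f K) = word K.1 := by
    intro K
    simp only [π, f, List.Vector.toList_mk, List.map_map]
    have : ((fun p : Fin (n - 1) × Bool => ((p.1 : ℕ), p.2)) ∘
        (fun x : {x // x ∈ word K.1} => ((⟨x.1.1, hgenS K x.1 x.2⟩ : Fin (n - 1)), x.1.2)))
        = fun x : {x // x ∈ word K.1} => x.1 := by
      funext x; rfl
    rw [this]
    exact List.attach_map_subtype_val _
  have hf : Function.Injective f := by
    intro K K' h
    apply Subtype.ext
    apply hinj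
    rw [← hπf K, ← hπf K', h]
  have hfin : Finite S := Finite.of_injective f hf
  refine ⟨Set.finite_coe_iff.mp hfin, ?_⟩
  calc Nat.card S ≤ Nat.card (Σ k : Fin (L + 1), List.Vector (Fin (n - 1) × Bool) k) :=
        Nat.card_le_card_of_injective f hf
    _ = ∑ k ∈ range (L + 1), (2 * (n - 1)) ^ k := by
        rw [Nat.card_eq_fintype_card, Fintype.card_sigma]
        rw [← Fin.sum_univ_eq_sum_range (fun k => (2 * (n - 1)) ^ k) (L + 1)]
        congr 1
        funext k
        simp [Fintype.card_prod, mul_comm]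
end
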